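/- arXiv:1001.1653 — 4 statements merged into one kernel-verified Lean document; each statement's English description precedes it below -/
import Mathlib

section
/- In the probability forecasting game, for every ε > 0 and C > 1 there exists N and a safe strategy for Skeptic such that for all plays of Forecaster and Reality, either |(1/N)∑_{n=1}^N y_n − (1/N)∑_{n=1}^N p_n| < ε or K_N ≥ C (game-theoretic weak law of large numbers). -/
/-- Skeptic's capital process given a strategy `S` mapping the history
`(p₁,y₁),…,(p_{n-1},y_{n-1})` and the current forecast `pₙ` to the move `sₙ`. -/
def cap (S : List (ℝ × ℝ) → ℝ → ℝ) (p y : ℕ → ℝ) : ℕ → ℝ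
  | 0 => 1
  | n + 1 =>
      cap S p y n +
        S (List.ofFn (fun i : Fin n => (p i, y i))) (p n) * (y n - p n)

/-!
Skeptic plays the quadratic martingale: with `Mₙ = ∑_{i<n} (yᵢ - pᵢ)` and
`Vₙ = ∑_{i<n} pᵢ (1 - pᵢ)`, betting `sₙ = a (2 Mₙ₋₁ + 1 - 2 pₙ)` makes his capital
`1 + a (Mₙ² - Vₙ)` as long as `yₙ ∈ {0, 1}`. Stopping at time `N` with `a = 4 / N`
keeps it nonnegative because `Vₙ ≤ N / 4`, and a deviation `|M_N / N| ≥ ε` forces the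
final capital up to `4 ε² N`, which is at least `C` once `N ≥ C / (4 ε²)`.
-/

open Finset

lemma mul_one_sub_le_quarter (x : ℝ) : x * (1 - x) ≤ 1 / 4 := by
  nlinarith [sq_nonneg (1 - 2 * x)]

lemma sum_mul_one_sub_le (p : ℕ → ℝ) (n : ℕ) :
    ∑ i ∈ range n, p i * (1 - p i) ≤ n / 4 := by
  calc ∑ i ∈ range n, p i * (1 - p i) ≤ ∑ _i ∈ range n, (1 / 4 : ℝ) :=
        sum_le_sum fun i _ => mul_one_sub_le_quarter (p i)
    _ = n / 4 := by simp [div_eq_mul_inv]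

/-- The one-step increment of `M² - V` is a bet of `2 M + 1 - 2 p` on `y - p`. -/
lemma add_sq_sub_sq_sub_mul_one_sub {y : ℝ} (hy : y = 0 ∨ y = 1) (m p : ℝ) :
    (m + (y - p)) ^ 2 - m ^ 2 - p * (1 - p) = (2 * m + 1 - 2 * p) * (y - p) := by
  rcases hy with rfl | rfl <;> ring

lemma sum_map_ofFn_sub (p y : ℕ → ℝ) (n : ℕ) :
    ((List.ofFn fun i : Fin n => (p i, y i)).map fun x => x.2 - x.1).sum =
      ∑ i ∈ range n, (y i - p i) := by
  simp only [List.map_ofFn, List.sum_ofFn, Function.comp_def]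
  exact Fin.sum_univ_eq_sum_range (fun i => y i - p i) n

lemma cap_eq_cap_min {S : List (ℝ × ℝ) → ℝ → ℝ} {N : ℕ}
    (hS : ∀ h q, N ≤ h.length → S h q = 0) (p y : ℕ → ℝ) (n : ℕ) :
    cap S p y n = cap S p y (min n N) := by
  obtain hn | hn := le_total n N
  · rw [min_eq_left hn]
  rw [min_eq_right hn]
  induction n, hn using Nat.le_induction with
  | base => rfl
  | succ n hNn ih => rw [cap, ih, hS _ _ (by simpa using hNn), zero_mul, add_zero]

def quadraticStrategy (a : ℝ) (N : ℕ) (h : List (ℝ × ℝ)) (q : ℝ) : ℝ :=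
  if h.length < N then a * (2 * (h.map fun x => x.2 - x.1).sum + 1 - 2 * q) else 0

lemma quadraticStrategy_of_le {a : ℝ} {N : ℕ} {h : List (ℝ × ℝ)} (hN : N ≤ h.length)
    (q : ℝ) : quadraticStrategy a N h q = 0 :=
  if_neg (not_lt.2 hN)

lemma cap_quadraticStrategy (a : ℝ) (N : ℕ) (p : ℕ → ℝ) {y : ℕ → ℝ}
    (hy : ∀ n, y n = 0 ∨ y n = 1) {n : ℕ} (hn : n ≤ N) :
    cap (quadraticStrategy a N) p y n =
      1 + a * ((∑ i ∈ range n, (y i - p i)) ^ 2 - ∑ i ∈ range n, p i * (1 - p i)) := by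
  induction n with
  | zero => simp [cap]
  | succ n ih =>
    have hnN : n < N := hn
    rw [cap, ih hnN.le, quadraticStrategy, if_pos (by simpa using hnN), sum_map_ofFn_sub,
      sum_range_succ, sum_range_succ]
    linear_combination
      (-a) * add_sq_sub_sq_sub_mul_one_sub (hy n) (∑ i ∈ range n, (y i - p i)) (p n)

lemma sq_div_le_cap_quadraticStrategy (N : ℕ) (p : ℕ → ℝ) {y : ℕ → ℝ}
    (hy : ∀ n, y n = 0 ∨ y n = 1) {n : ℕ} (hn : n ≤ N) :
    4 / N * (∑ i ∈ range n, (y i - p i)) ^ 2 ≤ cap (quadraticStrategy (4 / N) N) p y n := by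
  have hV : 4 / N * ∑ i ∈ range n, p i * (1 - p i) ≤ 1 :=
    calc 4 / N * ∑ i ∈ range n, p i * (1 - p i) ≤ 4 / N * (N / 4) := by
          gcongr
          exact (sum_mul_one_sub_le p n).trans (by gcongr)
      _ = (N : ℝ) / N := by ring
      _ ≤ 1 := div_self_le_one _
  rw [cap_quadraticStrategy _ _ p hy hn]
  linarith

lemma cap_quadraticStrategy_nonneg (N : ℕ) (p : ℕ → ℝ) {y : ℕ → ℝ}
    (hy : ∀ n, y n = 0 ∨ y n = 1) (n : ℕ) : 0 ≤ cap (quadraticStrategy (4 / N) N) p y n := by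
  rw [cap_eq_cap_min (fun _ _ h => quadraticStrategy_of_le h _)]
  exact (sq_div_le_cap_quadraticStrategy N p hy (min_le_right n N)).trans' (by positivity)

lemma exists_pos_le_mul (ε C : ℝ) (hε : 0 < ε) : ∃ N : ℕ, 0 < N ∧ C ≤ 4 * ε ^ 2 * N := by
  refine ⟨⌈C / (4 * ε ^ 2)⌉₊ + 1, Nat.succ_pos _, ?_⟩
  rw [← div_le_iff₀' (by positivity)]
  push_cast
  linarith [Nat.le_ceil (C / (4 * ε ^ 2))]

theorem stmt_5_general (ε C : ℝ) (hε : 0 < ε) :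
    ∃ N : ℕ, 0 < N ∧ ∃ S : List (ℝ × ℝ) → ℝ → ℝ,
      ∀ p y : ℕ → ℝ, (∀ n, p n ∈ Set.Icc (0 : ℝ) 1) →
        (∀ n, y n = 0 ∨ y n = 1) →
        (∀ n, 0 ≤ cap S p y n) ∧
          (|(∑ n ∈ Finset.range N, y n) / N - (∑ n ∈ Finset.range N, p n) / N| < ε ∨
            C ≤ cap S p y N) := by
  obtain ⟨N, hN, hCN⟩ := exists_pos_le_mul ε C hε
  refine ⟨N, hN, quadraticStrategy (4 / N) N, fun p y _ hy =>
    ⟨cap_quadraticStrategy_nonneg N p hy, ?_⟩⟩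
  rw [← sub_div, ← sum_sub_distrib, or_iff_not_imp_left, not_lt]
  set M := ∑ i ∈ range N, (y i - p i)
  intro hdev
  have hNpos : (0 : ℝ) < N := by exact_mod_cast hN
  calc C ≤ 4 * N * ε ^ 2 := by linarith
    _ ≤ 4 * N * (M / N) ^ 2 := by
        gcongr 4 * N * ?_
        simpa only [sq_abs] using pow_le_pow_left₀ hε.le hdev 2
    _ = 4 / N * M ^ 2 := by field_simp
    _ ≤ cap (quadraticStrategy (4 / N) N) p y N := sq_div_le_cap_quadraticStrategy N p hy le_rfl

/-- Game-theoretic weak law of large numbers: for every ε > 0 and C > 1 there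
is a horizon N and a safe strategy for Skeptic forcing either the frequency of
1's to be within ε of the average forecast, or the final capital to reach C. -/
theorem stmt_5 (ε C : ℝ) (hε : 0 < ε) (hC : 1 < C) :
    ∃ N : ℕ, 0 < N ∧ ∃ S : List (ℝ × ℝ) → ℝ → ℝ,
      ∀ p y : ℕ → ℝ, (∀ n, p n ∈ Set.Icc (0 : ℝ) 1) →
        (∀ n, y n = 0 ∨ y n = 1) →
        (∀ n, 0 ≤ cap S p y n) ∧
          (|(∑ n ∈ Finset.range N, y n) / N - (∑ n ∈ Finset.range N, p n) / N| < ε ∨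
            C ≤ cap S p y N) :=
  stmt_5_general ε C hε
end

section
/- A belief function defined from a multivalued mapping is ∞-monotone (totally monotone): for any finite family A_1,…,A_n of subsets of Ω, Bel(A_1 ∪ ⋯ ∪ A_n) ≥ ∑_{∅ ≠ I ⊆ {1,…,n}} (−1)^{|I|+1} Bel(⋂_{i∈I} A_i). -/
open scoped Classical

/-!
Writing `Γ_* A = {x | Γ x ⊆ A}` (`lowerInverse Γ A`), we have `Bel A = P (Γ_* A)`. The map
`Γ_*` commutes with intersections and sends a union to a superset of the union of the images.
Hence the alternating sum of the `Bel (⋂ i ∈ I, A i)` is, by inclusion–exclusion for the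
additive set function `P`, equal to `P (⋃ i, Γ_* (A i))`, which is at most
`P (Γ_* (⋃ i, A i))` because `P ≥ 0`.
-/

open Finset

section

variable {X Ω ι : Type*}

def lowerInverse (Γ : X → Set Ω) (A : Set Ω) : Set X := {x | Γ x ⊆ A}

lemma lowerInverse_biInter (Γ : X → Set Ω) (s : Finset ι) (A : ι → Set Ω) :
    lowerInverse Γ (⋂ i ∈ s, A i) = ⋂ i ∈ s, lowerInverse Γ (A i) := by
  ext x
  simp [lowerInverse]

lemma biUnion_lowerInverse_subset (Γ : X → Set Ω) (s : Finset ι) (A : ι → Set Ω) :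
    ⋃ i ∈ s, lowerInverse Γ (A i) ⊆ lowerInverse Γ (⋃ i ∈ s, A i) := by
  simp only [Set.iUnion_subset_iff]
  exact fun i hi x hx => hx.trans (Set.subset_biUnion_of_mem (u := A) hi)

noncomputable def belief [Fintype X] (P : X → ℝ) (Γ : X → Set Ω) (A : Set Ω) : ℝ :=
  ∑ x, (lowerInverse Γ A).indicator P x

theorem sum_powerset_neg_one_pow_mul_belief_biInter_le [Fintype X] (P : X → ℝ) (hP : 0 ≤ P)
    (Γ : X → Set Ω) (s : Finset ι) (A : ι → Set Ω) :
    ∑ I ∈ s.powerset with I.Nonempty, (-1 : ℝ) ^ (#I + 1) * belief P Γ (⋂ i ∈ I, A i) ≤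
      belief P Γ (⋃ i ∈ s, A i) :=
  calc ∑ I ∈ s.powerset with I.Nonempty, (-1 : ℝ) ^ (#I + 1) * belief P Γ (⋂ i ∈ I, A i)
      = ∑ x, ∑ I ∈ s.powerset with I.Nonempty,
          (-1 : ℤ) ^ (#I + 1) • (⋂ i ∈ I, lowerInverse Γ (A i)).indicator P x := by
        simp only [belief, lowerInverse_biInter, mul_sum, zsmul_eq_mul, Int.cast_pow,
          Int.cast_neg, Int.cast_one]
        exact sum_comm
    _ = ∑ x, (⋃ i ∈ s, lowerInverse Γ (A i)).indicator P x := by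
        simp only [indicator_biUnion_eq_sum_powerset]
    _ ≤ belief P Γ (⋃ i ∈ s, A i) :=
        sum_le_sum fun x _ =>
          Set.indicator_le_indicator_of_subset (biUnion_lowerInverse_subset Γ s A) hP x

end

theorem stmt_10_general {X Ω : Type*} [Fintype X]
    (P : X → ℝ) (hP : ∀ x, 0 ≤ P x)
    (Γ : X → Set Ω)
    (Bel : Set Ω → ℝ)
    (hBel : ∀ A, Bel A = ∑ x, if Γ x ⊆ A then P x else 0)
    (n : ℕ) (A : Fin n → Set Ω) :
    ∑ I ∈ Finset.univ.powerset.filter (fun I : Finset (Fin n) => I.Nonempty),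
        (-1 : ℝ) ^ (I.card + 1) * Bel (⋂ i ∈ I, A i) ≤
      Bel (⋃ i, A i) := by
  have hBel_eq : Bel = belief P Γ := by
    ext B
    simp only [hBel, belief, lowerInverse, Set.indicator_apply, Set.mem_ofPred_eq]
  simpa [hBel_eq] using sum_powerset_neg_one_pow_mul_belief_biInter_le P hP Γ univ A

/-- A belief function from a multivalued mapping is totally (∞-)monotone. -/
theorem stmt_10 {X Ω : Type*} [Fintype X] [Fintype Ω]
    (P : X → ℝ) (hP : ∀ x, 0 ≤ P x) (hPsum : ∑ x, P x = 1)
    (Γ : X → Set Ω) (hΓ : ∀ x, (Γ x).Nonempty)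
    (Bel : Set Ω → ℝ)
    (hBel : ∀ A, Bel A = ∑ x, if Γ x ⊆ A then P x else 0)
    (n : ℕ) (A : Fin n → Set Ω) :
    ∑ I ∈ Finset.univ.powerset.filter (fun I : Finset (Fin n) => I.Nonempty),
        (-1 : ℝ) ^ (I.card + 1) * Bel (⋂ i ∈ I, A i) ≤
      Bel (⋃ i, A i) :=
  stmt_10_general P hP Γ Bel hBel n A
end

section
/- Dempster's rule via product spaces: given (X₁,P₁,Γ₁) and (X₂,P₂,Γ₂) with Γᵢ(x) nonempty subsets of the same Ω, and assuming c := (P₁×P₂){(x₁,x₂) : Γ₁(x₁) ∩ Γ₂(x₂) ≠ ∅} > 0, the function Bel(A) := (P₁×P₂){(x₁,x₂) : ∅ ≠ Γ₁(x₁) ∩ Γ₂(x₂) ⊆ A} / c is a belief function on Ω, arising from the product probability conditioned on non-empty intersection with the multivalued map (x₁,x₂) ↦ Γ₁(x₁) ∩ Γ₂(x₂). -/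
open scoped Classical

/-! Conditioning on the event of a non-empty intersection is the normalisation of the product
weights by `c`; the combined belief is then the belief function of the conditioned mass
function pushed through `(x₁, x₂) ↦ Γ₁ x₁ ∩ Γ₂ x₂`, because the condition `Bel` imposes on
a pair already includes non-emptiness. -/

section Conditioning

variable {α : Type*} [Fintype α] (w : α → ℝ) (p : α → Prop) [DecidablePred p]

theorem sum_ite_div_eq_one {c : ℝ} (hc : c = ∑ x, if p x then w x else 0) (hc0 : c ≠ 0) :
    ∑ x, (if p x then w x / c else 0) = 1 := by
  calc ∑ x, (if p x then w x / c else 0)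
      = (∑ x, if p x then w x else 0) / c := by simp only [Finset.sum_div, ite_div, zero_div]
    _ = 1 := by rw [← hc, div_self hc0]

theorem sum_ite_and_ite_div (q : α → Prop) [DecidablePred q] (c : ℝ) :
    ∑ x, (if p x ∧ q x then (if p x then w x / c else 0) else 0) =
      (∑ x, if p x ∧ q x then w x else 0) / c := by
  rw [Finset.sum_div]
  refine Finset.sum_congr rfl fun x _ => ?_
  by_cases h : p x ∧ q x
  · simp only [if_pos h, if_pos h.1]
  · simp only [if_neg h, zero_div]

end Conditioning

theorem stmt_14_general {X₁ X₂ Ω : Type*} [Fintype X₁] [Fintype X₂]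
    (P₁ : X₁ → ℝ) (hP₁ : ∀ x, 0 ≤ P₁ x)
    (P₂ : X₂ → ℝ) (hP₂ : ∀ x, 0 ≤ P₂ x)
    (Γ₁ : X₁ → Set Ω)
    (Γ₂ : X₂ → Set Ω)
    (c : ℝ)
    (hc : c = ∑ x : X₁ × X₂,
        if (Γ₁ x.1 ∩ Γ₂ x.2).Nonempty then P₁ x.1 * P₂ x.2 else 0)
    (hcpos : 0 < c)
    (Bel : Set Ω → ℝ)
    (hBel : ∀ A, Bel A = (∑ x : X₁ × X₂,
        if (Γ₁ x.1 ∩ Γ₂ x.2).Nonempty ∧ Γ₁ x.1 ∩ Γ₂ x.2 ⊆ A then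
          P₁ x.1 * P₂ x.2 else 0) / c)
    (P' : X₁ × X₂ → ℝ)
    (hP' : ∀ x, P' x =
        if (Γ₁ x.1 ∩ Γ₂ x.2).Nonempty then P₁ x.1 * P₂ x.2 / c else 0) :
    ((∀ x, 0 ≤ P' x) ∧ ∑ x, P' x = 1) ∧
      ∀ A : Set Ω, Bel A = ∑ x : X₁ × X₂,
        if (Γ₁ x.1 ∩ Γ₂ x.2).Nonempty ∧ Γ₁ x.1 ∩ Γ₂ x.2 ⊆ A then P' x else 0 := by
  obtain rfl : P' = _ := funext hP'
  refine ⟨⟨fun x => ?_, sum_ite_div_eq_one _ _ hc hcpos.ne'⟩, fun A => ?_⟩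
  · dsimp only
    split_ifs
    exacts [div_nonneg (mul_nonneg (hP₁ _) (hP₂ _)) hcpos.le, le_rfl]
  · rw [hBel, sum_ite_and_ite_div]

/-- Dempster's rule via product spaces: the combined Bel arises from the
product probability conditioned on non-empty intersection together with the
multivalued map (x₁,x₂) ↦ Γ₁(x₁) ∩ Γ₂(x₂). -/
theorem stmt_14 {X₁ X₂ Ω : Type*} [Fintype X₁] [Fintype X₂] [Fintype Ω]
    (P₁ : X₁ → ℝ) (hP₁ : ∀ x, 0 ≤ P₁ x) (hP₁sum : ∑ x, P₁ x = 1)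
    (P₂ : X₂ → ℝ) (hP₂ : ∀ x, 0 ≤ P₂ x) (hP₂sum : ∑ x, P₂ x = 1)
    (Γ₁ : X₁ → Set Ω) (hΓ₁ : ∀ x, (Γ₁ x).Nonempty)
    (Γ₂ : X₂ → Set Ω) (hΓ₂ : ∀ x, (Γ₂ x).Nonempty)
    (c : ℝ)
    (hc : c = ∑ x : X₁ × X₂,
        if (Γ₁ x.1 ∩ Γ₂ x.2).Nonempty then P₁ x.1 * P₂ x.2 else 0)
    (hcpos : 0 < c)
    (Bel : Set Ω → ℝ)
    (hBel : ∀ A, Bel A = (∑ x : X₁ × X₂,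
        if (Γ₁ x.1 ∩ Γ₂ x.2).Nonempty ∧ Γ₁ x.1 ∩ Γ₂ x.2 ⊆ A then
          P₁ x.1 * P₂ x.2 else 0) / c)
    (P' : X₁ × X₂ → ℝ)
    (hP' : ∀ x, P' x =
        if (Γ₁ x.1 ∩ Γ₂ x.2).Nonempty then P₁ x.1 * P₂ x.2 / c else 0) :
    ((∀ x, 0 ≤ P' x) ∧ ∑ x, P' x = 1) ∧
      ∀ A : Set Ω, Bel A = ∑ x : X₁ × X₂,
        if (Γ₁ x.1 ∩ Γ₂ x.2).Nonempty ∧ Γ₁ x.1 ∩ Γ₂ x.2 ⊆ A then P' x else 0 :=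
  stmt_14_general P₁ hP₁ P₂ hP₂ Γ₁ Γ₂ c hc hcpos Bel hBel P' hP'
end

section
/- When both belief functions are ordinary (additive) probability distributions with Γᵢ single-valued (Γᵢ(x) = {fᵢ(x)}), Dempster's rule of combination yields the probability distribution proportional to the pointwise product of the two distributions: Bel({ω}) = Q₁(ω)Q₂(ω) / ∑_{ω'} Q₁(ω')Q₂(ω'), where Qᵢ(ω) := Pᵢ{x : fᵢ(x) = ω}, assuming the denominator is positive. -/
open scoped Classical

/-!
The focal set `{f₁ x₁} ∩ {f₂ x₂}` is nonempty iff `f₁ x₁ = f₂ x₂`, and then lies in `{ω}` iff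
both values equal `ω`. So the numerator and the normalising constant of Dempster's rule are the
`P₁ × P₂`-masses of `{f₁ x₁ = f₂ x₂ = ω}` and `{f₁ x₁ = f₂ x₂}`; the first factors as
`Q₁ ω * Q₂ ω`, and the second is its sum over `ω`.
-/

open Finset

namespace Set

variable {α : Type*}

theorem singleton_inter_singleton_nonempty {a b : α} :
    ({a} ∩ {b} : Set α).Nonempty ↔ a = b := by
  rw [singleton_inter_nonempty, mem_singleton_iff]

theorem singleton_inter_singleton_nonempty_and_subset_singleton {a b c : α} :
    ({a} ∩ {b} : Set α).Nonempty ∧ ({a} ∩ {b} : Set α) ⊆ {c} ↔ a = c ∧ b = c := by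
  rw [singleton_inter_singleton_nonempty]
  constructor
  · rintro ⟨rfl, hsub⟩
    rw [inter_self, singleton_subset_singleton] at hsub
    exact ⟨hsub, hsub⟩
  · rintro ⟨rfl, rfl⟩
    simp

end Set

section ProductOfPushforwards

variable {R : Type*} [NonUnitalNonAssocSemiring R]
  {X₁ X₂ Ω : Type*} [Fintype X₁] [Fintype X₂]
  (P₁ : X₁ → R) (P₂ : X₂ → R) (f₁ : X₁ → Ω) (f₂ : X₂ → Ω)

theorem sum_ite_and_eq_eq [Fintype Ω] (a b : Ω) (c : R) :
    (∑ ω, if a = ω ∧ b = ω then c else 0) = if a = b then c else 0 := by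
  simp_rw [ite_and, sum_ite_eq, mem_univ, if_true, eq_comm]

theorem sum_ite_eq_mul_sum_ite_eq (ω : Ω) :
    (∑ x, if f₁ x = ω then P₁ x else 0) * (∑ y, if f₂ y = ω then P₂ y else 0) =
      ∑ p : X₁ × X₂, if f₁ p.1 = ω ∧ f₂ p.2 = ω then P₁ p.1 * P₂ p.2 else 0 := by
  rw [sum_mul_sum, ← univ_product_univ, sum_product]
  simp_rw [ite_zero_mul_ite_zero]

theorem sum_prod_ite_eq_eq_sum_mul [Fintype Ω] :
    (∑ p : X₁ × X₂, if f₁ p.1 = f₂ p.2 then P₁ p.1 * P₂ p.2 else 0) =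
      ∑ ω, (∑ x, if f₁ x = ω then P₁ x else 0) * (∑ y, if f₂ y = ω then P₂ y else 0) := by
  simp_rw [sum_ite_eq_mul_sum_ite_eq, ← sum_ite_and_eq_eq]
  exact sum_comm

end ProductOfPushforwards

theorem stmt_16_general {X₁ X₂ Ω : Type*} [Fintype X₁] [Fintype X₂] [Fintype Ω]
    (P₁ : X₁ → ℝ)
    (P₂ : X₂ → ℝ)
    (f₁ : X₁ → Ω) (f₂ : X₂ → Ω)
    (Q₁ Q₂ : Ω → ℝ)
    (hQ₁ : ∀ ω, Q₁ ω = ∑ x, if f₁ x = ω then P₁ x else 0)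
    (hQ₂ : ∀ ω, Q₂ ω = ∑ x, if f₂ x = ω then P₂ x else 0) :
    ∀ ω : Ω,
      (∑ x : X₁ × X₂,
          if (({f₁ x.1} ∩ {f₂ x.2} : Set Ω)).Nonempty ∧
              (({f₁ x.1} ∩ {f₂ x.2} : Set Ω)) ⊆ {ω} then
            P₁ x.1 * P₂ x.2 else 0) /
        (∑ x : X₁ × X₂,
          if (({f₁ x.1} ∩ {f₂ x.2} : Set Ω)).Nonempty then
            P₁ x.1 * P₂ x.2 else 0) =
      Q₁ ω * Q₂ ω / ∑ ω', Q₁ ω' * Q₂ ω' := by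
  intro ω
  simp_rw [Set.singleton_inter_singleton_nonempty_and_subset_singleton,
    Set.singleton_inter_singleton_nonempty, hQ₁, hQ₂]
  rw [sum_prod_ite_eq_eq_sum_mul, sum_ite_eq_mul_sum_ite_eq]

/-- When both belief functions are ordinary probability distributions (the
multivalued mappings are single-valued), Dempster's rule yields the
probability distribution proportional to the pointwise product. -/
theorem stmt_16 {X₁ X₂ Ω : Type*} [Fintype X₁] [Fintype X₂] [Fintype Ω]
    (P₁ : X₁ → ℝ) (hP₁ : ∀ x, 0 ≤ P₁ x) (hP₁sum : ∑ x, P₁ x = 1)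
    (P₂ : X₂ → ℝ) (hP₂ : ∀ x, 0 ≤ P₂ x) (hP₂sum : ∑ x, P₂ x = 1)
    (f₁ : X₁ → Ω) (f₂ : X₂ → Ω)
    (Q₁ Q₂ : Ω → ℝ)
    (hQ₁ : ∀ ω, Q₁ ω = ∑ x, if f₁ x = ω then P₁ x else 0)
    (hQ₂ : ∀ ω, Q₂ ω = ∑ x, if f₂ x = ω then P₂ x else 0)
    (hd : 0 < ∑ ω, Q₁ ω * Q₂ ω) :
    ∀ ω : Ω,
      (∑ x : X₁ × X₂,
          if (({f₁ x.1} ∩ {f₂ x.2} : Set Ω)).Nonempty ∧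
              (({f₁ x.1} ∩ {f₂ x.2} : Set Ω)) ⊆ {ω} then
            P₁ x.1 * P₂ x.2 else 0) /
        (∑ x : X₁ × X₂,
          if (({f₁ x.1} ∩ {f₂ x.2} : Set Ω)).Nonempty then
            P₁ x.1 * P₂ x.2 else 0) =
      Q₁ ω * Q₂ ω / ∑ ω', Q₁ ω' * Q₂ ω' :=
  stmt_16_general P₁ P₂ f₁ f₂ Q₁ Q₂ hQ₁ hQ₂
end
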